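/- arXiv:1401.3826 — 2 statements merged into one kernel-verified Lean document; each statement's English description precedes it below -/
import Mathlib

section
/- Let ρ be a Young diagram (partition) with k boxes and let N ≥ 2k. Let ρ̄ = (N−k, ρ) denote the partition of N obtained by adding a first row of length N−k on top of ρ (valid since N−k ≥ ρ(1)). Then the dimension of the irreducible representation of S_N indexed by ρ̄ equals (N!/(N−2k)!) / (h(ρ) · ∏_{j=1}^{k} (N−k+1−j+ρᵀ(j))), where h(ρ) is the product of hook lengths of ρ and ρᵀ(j) is the length of the j-th column of ρ (set to 0 for j beyond the number of columns). -/
open Finset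

/-- The hook length of the box `(i,j)` of a Young diagram:
`h(i,j) = (ρ(i) − j) + (ρᵀ(j) − i) + 1` (boxes 0-indexed). -/
def hookLength (μ : YoungDiagram) (i j : ℕ) : ℕ :=
  μ.rowLen i + μ.colLen j - i - j - 1

/-- The product `h(ρ)` of all hook lengths of a Young diagram. -/
def hookProd (μ : YoungDiagram) : ℕ :=
  ∏ c ∈ μ.cells, hookLength μ c.1 c.2

/-- By the hook-length formula, the dimension of the irreducible representation of the
symmetric group `S_{|μ|}` indexed by the Young diagram `μ` is `|μ|! / h(μ)`. -/
def dimIrrep (μ : YoungDiagram) : ℚ :=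
  (Nat.factorial μ.card : ℚ) / (hookProd μ : ℚ)


lemma rowLen_zero_le_card (μ : YoungDiagram) : μ.rowLen 0 ≤ μ.card := by
  rw [YoungDiagram.rowLen_eq_card]
  exact Finset.card_le_card (fun c hc => (YoungDiagram.mem_row_iff.mp hc).1)

lemma colLen_eq_zero_of_card_le (μ : YoungDiagram) {k j : ℕ} (h : μ.card = k)
    (hj : k ≤ j) : μ.colLen j = 0 := by
  by_contra hne
  have h0 : ((0 : ℕ), j) ∈ μ := YoungDiagram.mem_iff_lt_colLen.mpr (Nat.pos_of_ne_zero hne)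
  have := (YoungDiagram.mem_iff_lt_rowLen.mp h0).trans_le (rowLen_zero_le_card μ)
  omega

lemma hookLength_pos {μ : YoungDiagram} {i j : ℕ} (h : (i, j) ∈ μ) :
    0 < hookLength μ i j := by
  have h1 := YoungDiagram.mem_iff_lt_rowLen.mp h
  have h2 := YoungDiagram.mem_iff_lt_colLen.mp h
  unfold hookLength; omega

lemma hookProd_pos (μ : YoungDiagram) : 0 < hookProd μ := by
  apply Finset.prod_pos
  intro c hc
  exact hookLength_pos ((YoungDiagram.mem_cells _).mp hc)

/-- Let `ρ` be a Young diagram with `k` boxes, `N ≥ 2k`, and let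
`ρ̄ = (N−k, ρ)` be the `N`-box diagram obtained by adding a first row of length `N−k`
on top of `ρ`. Then
`dim ρ̄ = (N!/(N−2k)!) / (h(ρ) · ∏_{j=1}^{k} (N−k+1−j+ρᵀ(j)))`,
where `ρᵀ(j)` is the length of the `j`-th column of `ρ`. -/
theorem dim_add_first_row (N k : ℕ) (hk : 2 * k ≤ N) (ρ ρbar : YoungDiagram)
    (hρ : ρ.card = k) (hbarcard : ρbar.card = N)
    (hbar0 : ρbar.rowLen 0 = N - k)
    (hbarrows : ∀ i, ρbar.rowLen (i + 1) = ρ.rowLen i) :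
    dimIrrep ρbar =
      ((Nat.factorial N : ℚ) / (Nat.factorial (N - 2 * k) : ℚ)) /
        ((hookProd ρ : ℚ) * ∏ j ∈ Finset.range k, ((N - k - j + ρ.colLen j : ℕ) : ℚ)) := by
  -- membership lemmas
  have hmemS : ∀ i j : ℕ, ((i + 1, j) ∈ ρbar ↔ (i, j) ∈ ρ) := by
    intro i j
    rw [YoungDiagram.mem_iff_lt_rowLen, hbarrows, ← YoungDiagram.mem_iff_lt_rowLen]
  have hmem0 : ∀ j : ℕ, (((0 : ℕ), j) ∈ ρbar ↔ j < N - k) := by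
    intro j
    rw [YoungDiagram.mem_iff_lt_rowLen, hbar0]
  -- column lengths
  have hcol : ∀ j < N - k, ρbar.colLen j = ρ.colLen j + 1 := by
    intro j hj
    have key : ∀ i : ℕ, i < ρbar.colLen j ↔ i < ρ.colLen j + 1 := by
      intro i
      rw [← YoungDiagram.mem_iff_lt_colLen]
      cases i with
      | zero => simp [hmem0 j, hj]
      | succ i => rw [hmemS i j, YoungDiagram.mem_iff_lt_colLen]; omega
    have h1 := key (ρbar.colLen j)
    have h2 := key (ρ.colLen j + 1)
    omega
  have hrow0ρ : ρ.rowLen 0 ≤ k := hρ ▸ rowLen_zero_le_card ρ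
  -- hook length identities
  have hhook0 : ∀ j < N - k, hookLength ρbar 0 j = N - k - j + ρ.colLen j := by
    intro j hj
    unfold hookLength
    rw [hbar0, hcol j hj]
    omega
  have hhookS : ∀ i j : ℕ, (i, j) ∈ ρ → hookLength ρbar (i + 1) j = hookLength ρ i j := by
    intro i j hij
    have h1 := YoungDiagram.mem_iff_lt_rowLen.mp hij
    have h2 := YoungDiagram.mem_iff_lt_colLen.mp hij
    have hjk : j < N - k := by
      have := (ρ.rowLen_anti 0 i (Nat.zero_le i))
      omega
    unfold hookLength
    rw [hbarrows, hcol j hjk]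
    omega
  -- split cells of ρbar
  have hsplit : hookProd ρbar =
      (∏ j ∈ Finset.range (N - k), hookLength ρbar 0 j) * hookProd ρ := by
    unfold hookProd
    rw [← Finset.prod_filter_mul_prod_filter_not ρbar.cells (fun c => c.1 = 0)]
    congr 1
    · rw [show (ρbar.cells.filter (fun c => c.1 = 0)) =
          (Finset.range (N - k)).image (fun j => ((0 : ℕ), j)) by
        ext c
        simp only [Finset.mem_filter, Finset.mem_image, Finset.mem_range,
          YoungDiagram.mem_cells]
        constructor
        · rintro ⟨hc, h0⟩
          exact ⟨c.2, by rw [← hmem0 c.2, show ((0:ℕ), c.2) = c by ext <;> simp [h0.symm]]; exact hc, by ext <;> simp [h0.symm]⟩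
        · rintro ⟨j, hj, rfl⟩
          exact ⟨(hmem0 j).mpr hj, rfl⟩]
      rw [Finset.prod_image (by intro a _ b _ h; simpa using h)]
    · rw [show (ρbar.cells.filter (fun c => ¬ c.1 = 0)) =
          ρ.cells.image (fun c => (c.1 + 1, c.2)) by
        ext c
        simp only [Finset.mem_filter, Finset.mem_image, YoungDiagram.mem_cells]
        obtain ⟨a, b⟩ := c
        constructor
        · rintro ⟨hc, h0⟩
          simp only at h0
          obtain ⟨i, rfl⟩ := Nat.exists_eq_succ_of_ne_zero h0
          exact ⟨(i, b), (hmemS i b).mp hc, rfl⟩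
        · rintro ⟨⟨i, j⟩, hj, h⟩
          simp only [Prod.mk.injEq] at h
          obtain ⟨rfl, rfl⟩ := h
          exact ⟨(hmemS i j).mpr hj, by simp⟩]
      rw [Finset.prod_image (by rintro ⟨a,b⟩ _ ⟨c,d⟩ _ h; simpa [Prod.ext_iff] using h)]
      exact Finset.prod_congr rfl (fun c hc => hhookS c.1 c.2 ((YoungDiagram.mem_cells _).mp hc))
  -- compute the first-row product
  have hrange : N - k = k + (N - 2 * k) := by omega
  have hrow0prod : (∏ j ∈ Finset.range (N - k), hookLength ρbar 0 j) =
      (∏ j ∈ Finset.range k, (N - k - j + ρ.colLen j)) * Nat.factorial (N - 2 * k) := by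
    have e : Finset.range (N - k) = Finset.range (k + (N - 2 * k)) := by
      congr 1
    rw [e, Finset.prod_range_add]
    congr 1
    · exact Finset.prod_congr rfl (fun j hj => hhook0 j (by simp at hj; omega))
    · have : ∀ x ∈ Finset.range (N - 2 * k), hookLength ρbar 0 (k + x) = (N - 2 * k) - x := by
        intro x hx
        simp only [Finset.mem_range] at hx
        rw [hhook0 (k + x) (by omega), colLen_eq_zero_of_card_le ρ hρ (by omega)]
        omega
      rw [Finset.prod_congr rfl this]
      rw [← Finset.prod_range_add_one_eq_factorial (N - 2 * k),
        ← Finset.prod_range_reflect (fun x => x + 1) (N - 2 * k)]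
      exact Finset.prod_congr rfl (fun x hx => by simp at hx; omega)
  -- put it together
  unfold dimIrrep
  rw [hbarcard, hsplit, hrow0prod]
  have hpos1 : (0:ℚ) < hookProd ρ := by exact_mod_cast hookProd_pos ρ
  have hpos2 : (0:ℚ) < ∏ j ∈ Finset.range k, ((N - k - j + ρ.colLen j : ℕ) : ℚ) := by
    apply Finset.prod_pos
    intro j hj
    simp only [Finset.mem_range] at hj
    have : 0 < N - k - j + ρ.colLen j := by omega
    exact_mod_cast this
  have hpos3 : (0:ℚ) < (Nat.factorial (N - 2 * k) : ℚ) := by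
    exact_mod_cast Nat.factorial_pos _
  push_cast
  rw [div_div]
  ring
end

section
/- Let ζ be a partition of k with N ≥ 2k+1, let ζ̄ = (N−k, ζ) ⊢ N, and let ζ̄₁ = (N−k−1, ζ) ⊢ N−1 be obtained from ζ̄ by removing one box from the first row. Then 1 − dim(ζ̄₁)/dim(ζ̄) ≤ 2k/N, where dim denotes the dimension of the corresponding irreducible representation of the symmetric group. -/
open Finset

lemma nat_eq_of_lt_iff {a b : ℕ} (h : ∀ i, i < a ↔ i < b) : a = b := by
  have h1 := h a; have h2 := h b; omega

lemma hookProd_eq (μ : YoungDiagram) :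
    hookProd μ = (∏ j ∈ range (μ.rowLen 0), hookLength μ 0 j) *
      (∏ c ∈ μ.cells.filter (fun c => c.1 ≠ 0), hookLength μ c.1 c.2) := by
  rw [hookProd, ← Finset.prod_filter_mul_prod_filter_not μ.cells (fun c => c.1 = 0)]
  congr 1
  have hs : μ.cells.filter (fun c => c.1 = 0) = {(0 : ℕ)} ×ˢ range (μ.rowLen 0) := by
    rw [← YoungDiagram.row_eq_prod]
    ext c
    simp [YoungDiagram.mem_row_iff, YoungDiagram.mem_cells, and_comm]
  rw [hs, Finset.prod_product']
  simp

lemma colLen_bar {ζ ν : YoungDiagram} {m : ℕ} (h0 : ν.rowLen 0 = m)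
    (hrows : ∀ i, ν.rowLen (i + 1) = ζ.rowLen i) {j : ℕ} (hj : j < m) :
    ν.colLen j = ζ.colLen j + 1 := by
  apply nat_eq_of_lt_iff
  intro i
  rw [← YoungDiagram.mem_iff_lt_colLen]
  cases i with
  | zero => simp [YoungDiagram.mem_iff_lt_rowLen, h0, hj]
  | succ i =>
    rw [YoungDiagram.mem_iff_lt_rowLen, hrows]
    have := @YoungDiagram.mem_iff_lt_colLen ζ i j
    rw [YoungDiagram.mem_iff_lt_rowLen] at this
    omega

lemma colLen_eq_zero {ζ : YoungDiagram} {k j : ℕ} (hζ : ζ.card = k) (hj : k ≤ j) :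
    ζ.colLen j = 0 := by
  have hr : ζ.rowLen 0 ≤ ζ.card := by
    rw [YoungDiagram.rowLen_eq_card]
    exact Finset.card_le_card (fun c hc => (YoungDiagram.mem_cells c).2
      (YoungDiagram.mem_row_iff.1 hc).1)
  by_contra hne
  have : (0, j) ∈ ζ := YoungDiagram.mem_iff_lt_colLen.2 (by omega)
  have := YoungDiagram.mem_iff_lt_rowLen.1 this
  omega

lemma prod_range_sub_eq_factorial (m : ℕ) : ∏ j ∈ range m, (m - j) = m.factorial := by
  rw [← Finset.prod_range_add_one_eq_factorial m, ← Finset.prod_range_reflect (fun j => j + 1) m]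
  apply Finset.prod_congr rfl
  intro j hj
  rw [mem_range] at hj
  omega

lemma key_nat (N k : ℕ) (h : 2 * k + 1 ≤ N) (ζ ζbar ζbar1 : YoungDiagram)
    (hζ : ζ.card = k)
    (hbar0 : ζbar.rowLen 0 = N - k)
    (hbarrows : ∀ i, ζbar.rowLen (i + 1) = ζ.rowLen i)
    (hbar10 : ζbar1.rowLen 0 = N - k - 1)
    (hbar1rows : ∀ i, ζbar1.rowLen (i + 1) = ζ.rowLen i) :
    (N - 2 * k) * hookProd ζbar1 ≤ hookProd ζbar := by
  have hb : ∀ j, j < N - k → hookLength ζbar 0 j = N - k - j + ζ.colLen j := by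
    intro j hj
    simp only [hookLength, hbar0, colLen_bar hbar0 hbarrows hj]
    omega
  have hb1 : ∀ j, j < N - k - 1 → hookLength ζbar1 0 j = N - k - 1 - j + ζ.colLen j := by
    intro j hj
    simp only [hookLength, hbar10, colLen_bar hbar10 hbar1rows hj]
    omega
  have hsets : ζbar.cells.filter (fun c => c.1 ≠ 0) = ζbar1.cells.filter (fun c => c.1 ≠ 0) := by
    ext ⟨i, j⟩
    simp only [mem_filter, YoungDiagram.mem_cells, YoungDiagram.mem_iff_lt_rowLen]
    cases i with
    | zero => simp
    | succ i => rw [hbarrows, hbar1rows]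
  have hLeq : ∏ c ∈ ζbar1.cells.filter (fun c => c.1 ≠ 0), hookLength ζbar1 c.1 c.2
      = ∏ c ∈ ζbar.cells.filter (fun c => c.1 ≠ 0), hookLength ζbar c.1 c.2 := by
    rw [hsets]
    apply Finset.prod_congr rfl
    rintro ⟨i, j⟩ hc
    simp only [mem_filter, YoungDiagram.mem_cells] at hc
    obtain ⟨hmem, hne⟩ := hc
    obtain ⟨i, rfl⟩ : ∃ i', i = i' + 1 := ⟨i - 1, by omega⟩
    have hj : j < ζ.rowLen i := by
      rw [← hbar1rows]
      exact YoungDiagram.mem_iff_lt_rowLen.1 hmem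
    have hjk : j < N - k - 1 := by
      have h1 : ζ.rowLen i ≤ ζ.rowLen 0 := ζ.rowLen_anti 0 i (Nat.zero_le _)
      have h2 : ζ.rowLen 0 ≤ ζ.card := rowLen_zero_le_card ζ
      omega
    simp only [hookLength, hbarrows, hbar1rows,
      colLen_bar hbar0 hbarrows (by omega : j < N - k),
      colLen_bar hbar10 hbar1rows hjk]
  rw [hookProd_eq ζbar, hookProd_eq ζbar1, hbar0, hbar10, hLeq]
  have e1 : ∏ j ∈ range (N - k), hookLength ζbar 0 j
      = (∏ j ∈ range k, (N - k - j + ζ.colLen j)) * (N - 2 * k).factorial := by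
    rw [show N - k = k + (N - 2 * k) by omega, Finset.prod_range_add]
    congr 1
    · apply Finset.prod_congr rfl
      intro j hj
      rw [mem_range] at hj
      rw [hb j (by omega)]
      omega
    · rw [← prod_range_sub_eq_factorial (N - 2 * k)]
      apply Finset.prod_congr rfl
      intro j hj
      rw [mem_range] at hj
      rw [hb (k + j) (by omega), colLen_eq_zero hζ (by omega)]
      omega
  have e2 : ∏ j ∈ range (N - k - 1), hookLength ζbar1 0 j
      = (∏ j ∈ range k, (N - k - 1 - j + ζ.colLen j)) * (N - 2 * k - 1).factorial := by
    rw [show N - k - 1 = k + (N - 2 * k - 1) by omega, Finset.prod_range_add]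
    congr 1
    · apply Finset.prod_congr rfl
      intro j hj
      rw [mem_range] at hj
      rw [hb1 j (by omega)]
      omega
    · rw [← prod_range_sub_eq_factorial (N - 2 * k - 1)]
      apply Finset.prod_congr rfl
      intro j hj
      rw [mem_range] at hj
      rw [hb1 (k + j) (by omega), colLen_eq_zero hζ (by omega)]
      omega
  rw [e1, e2]
  have hA : (∏ j ∈ range k, (N - k - 1 - j + ζ.colLen j))
      ≤ ∏ j ∈ range k, (N - k - j + ζ.colLen j) := by
    apply Finset.prod_le_prod'
    intro j hj
    omega
  have hfac : (N - 2 * k) * (N - 2 * k - 1).factorial = (N - 2 * k).factorial :=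
    Nat.mul_factorial_pred (by omega)
  calc (N - 2 * k) * ((∏ j ∈ range k, (N - k - 1 - j + ζ.colLen j)) * (N - 2 * k - 1).factorial
          * ∏ c ∈ ζbar.cells.filter (fun c => c.1 ≠ 0), hookLength ζbar c.1 c.2)
      = (∏ j ∈ range k, (N - k - 1 - j + ζ.colLen j)) * ((N - 2 * k) * (N - 2 * k - 1).factorial)
          * ∏ c ∈ ζbar.cells.filter (fun c => c.1 ≠ 0), hookLength ζbar c.1 c.2 := by ring
    _ = (∏ j ∈ range k, (N - k - 1 - j + ζ.colLen j)) * (N - 2 * k).factorial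
          * ∏ c ∈ ζbar.cells.filter (fun c => c.1 ≠ 0), hookLength ζbar c.1 c.2 := by rw [hfac]
    _ ≤ (∏ j ∈ range k, (N - k - j + ζ.colLen j)) * (N - 2 * k).factorial
          * ∏ c ∈ ζbar.cells.filter (fun c => c.1 ≠ 0), hookLength ζbar c.1 c.2 := by
        gcongr

/-- Let `ζ ⊢ k` with `N ≥ 2k+1`, let `ζ̄ = (N−k, ζ) ⊢ N` and
`ζ̄₁ = (N−k−1, ζ) ⊢ N−1` (remove one box from the first row of `ζ̄`). Then
`1 − dim(ζ̄₁)/dim(ζ̄) ≤ 2k/N`. -/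
theorem one_sub_dim_ratio_le (N k : ℕ) (h : 2 * k + 1 ≤ N) (ζ ζbar ζbar1 : YoungDiagram)
    (hζ : ζ.card = k)
    (hbarcard : ζbar.card = N) (hbar0 : ζbar.rowLen 0 = N - k)
    (hbarrows : ∀ i, ζbar.rowLen (i + 1) = ζ.rowLen i)
    (hbar1card : ζbar1.card = N - 1) (hbar10 : ζbar1.rowLen 0 = N - k - 1)
    (hbar1rows : ∀ i, ζbar1.rowLen (i + 1) = ζ.rowLen i) :
    1 - dimIrrep ζbar1 / dimIrrep ζbar ≤ 2 * (k : ℚ) / N := by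
  have key := key_nat N k h ζ ζbar ζbar1 hζ hbar0 hbarrows hbar10 hbar1rows
  have h1 : (0:ℚ) < (hookProd ζbar1 : ℚ) := by exact_mod_cast hookProd_pos ζbar1
  have h0 : (0:ℚ) < (hookProd ζbar : ℚ) := by exact_mod_cast hookProd_pos ζbar
  have hN : (0:ℚ) < (N:ℚ) := by exact_mod_cast (by omega : 0 < N)
  have hfac : (ζbar.card).factorial = N * (ζbar1.card).factorial := by
    rw [hbarcard, hbar1card, ← Nat.mul_factorial_pred (by omega : N ≠ 0)]
  have hX : dimIrrep ζbar1 / dimIrrep ζbar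
      = (hookProd ζbar : ℚ) / ((N : ℚ) * (hookProd ζbar1 : ℚ)) := by
    unfold dimIrrep
    rw [hfac]
    have hf1 : ((ζbar1.card).factorial : ℚ) ≠ 0 := by
      exact_mod_cast (Nat.factorial_pos _).ne'
    push_cast
    field_simp
  rw [hX]
  have keyQ : ((N:ℚ) - 2 * k) * (hookProd ζbar1 : ℚ) ≤ (hookProd ζbar : ℚ) := by
    have h2 : ((N - 2 * k : ℕ) : ℚ) = (N:ℚ) - 2 * k := by
      push_cast [Nat.cast_sub (by omega : 2 * k ≤ N)]
      ring
    rw [← h2]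
    exact_mod_cast key
  have e : ((N:ℚ) - 2 * k) / N ≤ (hookProd ζbar : ℚ) / ((N : ℚ) * (hookProd ζbar1 : ℚ)) := by
    rw [div_le_div_iff₀ hN (mul_pos hN h1)]
    nlinarith [mul_le_mul_of_nonneg_right keyQ (le_of_lt hN)]
  have e2 : ((N:ℚ) - 2 * k) / N = 1 - 2 * (k:ℚ) / N := by
    field_simp
  linarith
end
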